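/- The logic ALCQUO is not closed under the substitution induced by the merge action: there exist two finite interpretations I, J related by an ALCQUO-bisimulation and related elements d₁ Z d₁' such that, after performing mrg(i,j) in both, d₁ satisfies the concept (≥ 2 R C) while d₁' does not; consequently no ALCQUO concept is equivalent to (≥ 2 R C)[mrg(i,j)]. -/

import Mathlib

/-- An interpretation for description logics with atomic concepts `C`, roles `R`
and nominals `O`, over domain `Δ`. -/
structure DLI (C R O Δ : Type) where
  conc : C → Set Δ
  rel : R → Set (Δ × Δ)
  nom : O → Δ

/-- ALCQUO concepts: ⊤, atomic concepts, nominals, ¬, ∨, ∃R.C, the universal role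
∃U.C, and counting quantifiers (< n R C). -/
inductive CQ (C R O : Type) where
  | top : CQ C R O
  | atom (c : C) : CQ C R O
  | nomC (o : O) : CQ C R O
  | neg (φ : CQ C R O) : CQ C R O
  | or (φ ψ : CQ C R O) : CQ C R O
  | ex (r : R) (φ : CQ C R O) : CQ C R O
  | exU (φ : CQ C R O) : CQ C R O
  | lt (n : ℕ) (r : R) (φ : CQ C R O) : CQ C R O

/-- Satisfaction of an ALCQUO concept at an element of an interpretation.
`(< n R φ)` holds at `d` iff `d` has fewer than `n` `R`-successors satisfying `φ`. -/
def dsat {C R O Δ : Type} (I : DLI C R O Δ) : Δ → CQ C R O → Prop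
  | _, .top => True
  | d, .atom c => d ∈ I.conc c
  | d, .nomC o => d = I.nom o
  | d, .neg φ => ¬ dsat I d φ
  | d, .or φ ψ => dsat I d φ ∨ dsat I d ψ
  | d, .ex r φ => ∃ d', (d, d') ∈ I.rel r ∧ dsat I d' φ
  | _, .exU φ => ∃ d', dsat I d' φ
  | d, .lt n r φ =>
      ¬ ∃ f : Fin n → Δ, Function.Injective f ∧ ∀ k, (d, f k) ∈ I.rel r ∧ dsat I (f k) φ

/-- `Z` is an ALCQUO-bisimulation between `I` and `J`. -/
structure IsBisim {C R O Δ₁ Δ₂ : Type} (I : DLI C R O Δ₁) (J : DLI C R O Δ₂)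
    (Z : Δ₁ → Δ₂ → Prop) : Prop where
  nonempty : ∃ d₁ d₂, Z d₁ d₂
  alc1 : ∀ d₁ d₂, Z d₁ d₂ → ∀ c, d₁ ∈ I.conc c ↔ d₂ ∈ J.conc c
  alc2 : ∀ d₁ d₂ e₁ r, Z d₁ d₂ → (d₁, e₁) ∈ I.rel r → ∃ e₂, (d₂, e₂) ∈ J.rel r ∧ Z e₁ e₂
  alc3 : ∀ d₁ d₂ e₂ r, Z d₁ d₂ → (d₂, e₂) ∈ J.rel r → ∃ e₁, (d₁, e₁) ∈ I.rel r ∧ Z e₁ e₂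
  alc4 : ∀ o, Z (I.nom o) (J.nom o)
  nomO : ∀ d₁ d₂, Z d₁ d₂ → ∀ o, (d₁ = I.nom o ↔ d₂ = J.nom o)
  u1 : ∀ d₁, ∃ d₂, Z d₁ d₂
  u2 : ∀ d₂, ∃ d₁, Z d₁ d₂
  q : ∀ d₁ d₂ r, Z d₁ d₂ →
      (∀ e₁, (d₁, e₁) ∈ I.rel r → ∃! e₂, ((d₂, e₂) ∈ J.rel r ∧ Z e₁ e₂)) ∧
      (∀ e₂, (d₂, e₂) ∈ J.rel r → ∃! e₁, ((d₁, e₁) ∈ I.rel r ∧ Z e₁ e₂))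

/-- The effect of the merge action `mrg(i,j)` (fusing the node denoted by the
nominal `j` into the one denoted by `i`) on an interpretation: `j`'s denotation is
removed from all concepts and roles, its labels are given to `i` and all its edge
endpoints are redirected to `i`. -/
def mergeDL {C R O Δ : Type} (I : DLI C R O Δ) (i j : O) : DLI C R O Δ where
  conc := fun c => {x | x ≠ I.nom j ∧ (x ∈ I.conc c ∨ (x = I.nom i ∧ I.nom j ∈ I.conc c))}
  rel := fun r => {p | p.1 ≠ I.nom j ∧ p.2 ≠ I.nom j ∧
      (p ∈ I.rel r ∨ ((p.1, I.nom j) ∈ I.rel r ∧ p.2 = I.nom i) ∨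
       ((I.nom j, p.2) ∈ I.rel r ∧ p.1 = I.nom i) ∨
       (p.1 = I.nom i ∧ p.2 = I.nom i ∧ (I.nom j, I.nom j) ∈ I.rel r))}
  nom := I.nom

/-- The interpretation `I`: domain `{d₁,d₂,d₃,d₄} = Fin 4`, `i = d₁ = 0`,
`j = d₂ = 1`, `C = {d₃,d₄} = {2,3}`, `R = {(d₁,d₃),(d₂,d₄)}`. -/
def I₁ : DLI Unit Unit Bool (Fin 4) where
  conc := fun _ => {2, 3}
  rel := fun _ => {((0 : Fin 4), (2 : Fin 4)), ((1 : Fin 4), (3 : Fin 4))}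
  nom := fun b => bif b then 1 else 0

/-- The interpretation `J`: domain `{d₁',d₂',d₃'} = Fin 3`, `i = d₁' = 0`,
`j = d₂' = 1`, `C = {d₃'} = {2}`, `R = {(d₁',d₃'),(d₂',d₃')}`. -/
def J₁ : DLI Unit Unit Bool (Fin 3) where
  conc := fun _ => {2}
  rel := fun _ => {((0 : Fin 3), (2 : Fin 3)), ((1 : Fin 3), (2 : Fin 3))}
  nom := fun b => bif b then 1 else 0

/-- The concept `(≥ 2 R C)`. -/
def geq2RC : CQ Unit Unit Bool := .neg (.lt 2 () (.atom ()))

/-! ALCQUO concepts are invariant under ALCQUO-bisimulations, by induction on the concept; for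
the counting quantifiers, the uniqueness clause of the bisimulation turns an injective family of
successors on one side into an injective family on the other. So a concept equivalent to
`(≥ 2 R C)[mrg(i,j)]` would hold at `d₁'` in `J₁` whenever it holds at `d₁` in `I₁`. But merging
gives `d₁` the two `C`-successors `d₃, d₄`, while in `J₁` both edges already end in `d₃'`. -/

namespace IsBisim

variable {C R O Δ₁ Δ₂ : Type} {I : DLI C R O Δ₁} {J : DLI C R O Δ₂} {Z : Δ₁ → Δ₂ → Prop}

theorem symm (hZ : IsBisim I J Z) : IsBisim J I (flip Z) where
  nonempty := let ⟨d₁, d₂, h⟩ := hZ.nonempty; ⟨d₂, d₁, h⟩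
  alc1 d₂ d₁ h c := (hZ.alc1 d₁ d₂ h c).symm
  alc2 d₂ d₁ e₂ r h he := hZ.alc3 d₁ d₂ e₂ r h he
  alc3 d₂ d₁ e₁ r h he := hZ.alc2 d₁ d₂ e₁ r h he
  alc4 := hZ.alc4
  nomO d₂ d₁ h o := (hZ.nomO d₁ d₂ h o).symm
  u1 := hZ.u2
  u2 := hZ.u1
  q d₂ d₁ r h := (hZ.q d₁ d₂ r h).symm

theorem exists_injective_succ (hZ : IsBisim I J Z) {d₁ : Δ₁} {d₂ : Δ₂} (h : Z d₁ d₂) (r : R)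
    {ι : Type} {f : ι → Δ₁} (hf : Function.Injective f) (hsucc : ∀ k, (d₁, f k) ∈ I.rel r) :
    ∃ g : ι → Δ₂, Function.Injective g ∧ ∀ k, (d₂, g k) ∈ J.rel r ∧ Z (f k) (g k) := by
  choose g hg using fun k => hZ.alc2 d₁ d₂ (f k) r h (hsucc k)
  refine ⟨g, fun k k' hkk' => hf ?_, hg⟩
  obtain ⟨e₁, -, huniq⟩ := (hZ.q d₁ d₂ r h).2 (g k) (hg k).1
  exact (huniq _ ⟨hsucc k, (hg k).2⟩).trans (huniq _ ⟨hsucc k', hkk' ▸ (hg k').2⟩).symm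

theorem dsat_of_dsat {C R O : Type} (φ : CQ C R O) :
    ∀ {Δ₁ Δ₂ : Type} {I : DLI C R O Δ₁} {J : DLI C R O Δ₂} {Z : Δ₁ → Δ₂ → Prop},
      IsBisim I J Z → ∀ d₁ d₂, Z d₁ d₂ → dsat I d₁ φ → dsat J d₂ φ := by
  induction φ with
  | top => exact fun _ _ _ _ _ => trivial
  | atom c => exact fun hZ _ _ h => (hZ.alc1 _ _ h c).1
  | nomC o => exact fun hZ _ _ h => (hZ.nomO _ _ h o).1
  | neg φ ih => exact fun hZ _ _ h hn hs => hn (ih hZ.symm _ _ h hs)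
  | or φ ψ ihφ ihψ => exact fun hZ _ _ h => Or.imp (ihφ hZ _ _ h) (ihψ hZ _ _ h)
  | ex r φ ih =>
    rintro _ _ _ _ _ hZ d₁ d₂ h ⟨e₁, he, hs⟩
    obtain ⟨e₂, he₂, h'⟩ := hZ.alc2 d₁ d₂ e₁ r h he
    exact ⟨e₂, he₂, ih hZ _ _ h' hs⟩
  | exU φ ih =>
    rintro _ _ _ _ _ hZ - - - ⟨e₁, hs⟩
    obtain ⟨e₂, h'⟩ := hZ.u1 e₁
    exact ⟨e₂, ih hZ _ _ h' hs⟩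
  | lt n r φ ih =>
    rintro _ _ _ _ _ hZ d₁ d₂ h hlt ⟨g, hg, hsucc⟩
    obtain ⟨f, hf, hf'⟩ := hZ.symm.exists_injective_succ h r hg fun k => (hsucc k).1
    exact hlt ⟨f, hf, fun k => ⟨(hf' k).1, ih hZ.symm _ _ (hf' k).2 (hsucc k).2⟩⟩

theorem dsat_iff (hZ : IsBisim I J Z) {d₁ : Δ₁} {d₂ : Δ₂} (h : Z d₁ d₂) (φ : CQ C R O) :
    dsat I d₁ φ ↔ dsat J d₂ φ :=
  ⟨dsat_of_dsat φ hZ _ _ h, dsat_of_dsat φ hZ.symm _ _ h⟩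

end IsBisim

theorem dsat_geq2RC_iff {Δ : Type} (I : DLI Unit Unit Bool Δ) (d : Δ) :
    dsat I d geq2RC ↔ ∃ e₁ e₂, e₁ ≠ e₂ ∧
      ((d, e₁) ∈ I.rel () ∧ e₁ ∈ I.conc ()) ∧ ((d, e₂) ∈ I.rel () ∧ e₂ ∈ I.conc ()) := by
  simp only [geq2RC, dsat, not_not]
  constructor
  · rintro ⟨f, hf, hsucc⟩
    exact ⟨f 0, f 1, hf.ne (by decide), hsucc 0, hsucc 1⟩
  · rintro ⟨e₁, e₂, hne, h₁, h₂⟩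
    refine ⟨![e₁, e₂], ?_, Fin.forall_fin_two.2 ⟨h₁, h₂⟩⟩
    exact Fin.cons_injective_iff.2 ⟨by simpa using hne, Function.injective_of_subsingleton _⟩

/-- The bisimulation `{(d₁,d₁'),(d₂,d₂'),(d₃,d₃'),(d₄,d₃')}` is the graph of this map. -/
def collapse : Fin 4 → Fin 3 := ![0, 1, 2, 2]

theorem isBisim_I₁_J₁ : IsBisim I₁ J₁ (fun a b => collapse a = b) := by
  constructor <;> simp [I₁, J₁, collapse, Fin.forall_fin_succ, Fin.exists_fin_succ]
  case q => refine ⟨⟨?_, ?_⟩, ?_, ?_⟩ <;> exact ⟨_, ⟨rfl, rfl⟩, fun _ h => h.1⟩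

theorem dsat_mergeDL_I₁_geq2RC : dsat (mergeDL I₁ false true) 0 geq2RC :=
  (dsat_geq2RC_iff _ _).2 ⟨2, 3, by decide, by simp [mergeDL, I₁], by simp [mergeDL, I₁]⟩

theorem eq_two_of_mem_mergeDL_J₁_rel {e : Fin 3} (h : (0, e) ∈ (mergeDL J₁ false true).rel ()) :
    e = 2 := by
  simp_all [mergeDL, J₁]

theorem not_dsat_mergeDL_J₁_geq2RC : ¬ dsat (mergeDL J₁ false true) 0 geq2RC := by
  rw [dsat_geq2RC_iff]
  rintro ⟨e₁, e₂, hne, ⟨h₁, -⟩, h₂, -⟩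
  exact hne ((eq_two_of_mem_mergeDL_J₁_rel h₁).trans (eq_two_of_mem_mergeDL_J₁_rel h₂).symm)

/-- ALCQUO is not closed under the substitution induced by merge: the finite
interpretations `I₁` and `J₁` are ALCQUO-bisimilar at `d₁` and `d₁'`, yet after
performing `mrg(i,j)` in both, `d₁` satisfies `(≥ 2 R C)` while `d₁'` does not;
consequently no ALCQUO concept is equivalent to `(≥ 2 R C)[mrg(i,j)]`. -/
theorem ALCQUO_not_closed_under_merge :
    (∃ Z : Fin 4 → Fin 3 → Prop, IsBisim I₁ J₁ Z ∧ Z 0 0 ∧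
        dsat (mergeDL I₁ false true) 0 geq2RC ∧
        ¬ dsat (mergeDL J₁ false true) 0 geq2RC) ∧
    ¬ ∃ φ : CQ Unit Unit Bool,
        ∀ (Δ : Type) (I : DLI Unit Unit Bool Δ) (d : Δ),
          dsat I d φ ↔ dsat (mergeDL I false true) d geq2RC := by
  refine ⟨⟨_, isBisim_I₁_J₁, rfl, dsat_mergeDL_I₁_geq2RC, not_dsat_mergeDL_J₁_geq2RC⟩, ?_⟩
  rintro ⟨φ, hφ⟩
  have hI : dsat I₁ 0 φ := (hφ _ I₁ 0).2 dsat_mergeDL_I₁_geq2RC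
  have hJ : dsat J₁ 0 φ := (isBisim_I₁_J₁.dsat_iff rfl φ).1 hI
  exact not_dsat_mergeDL_J₁_geq2RC ((hφ _ J₁ 0).1 hJ)
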